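/- Let D and D' be datasets over two finite attribute domains I and J, where D' is obtained from D by adding one record with values (x, y). For a dataset with n records, let a_i (resp. b_j) denote the count of records with first attribute value i (resp. second attribute value j), and α_{ij} the count of records with values (i,j). Define InDif(D) = Σ_{i,j} |a_i b_j / n − α_{ij}|. Then |InDif(D') − InDif(D)| ≤ 4. -/

import Mathlib

open Multiset

/-- The Independent Difference metric: the ℓ1 distance between the empirical
two-way marginal counts and the product of one-way marginal counts (scaled). -/
noncomputable def InDif {I J : Type*} [Fintype I] [Fintype J]
    [DecidableEq I] [DecidableEq J] (D : Multiset (I × J)) : ℝ :=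
  ∑ i : I, ∑ j : J,
    |((D.countP (fun r => r.1 = i) : ℝ) * (D.countP (fun r => r.2 = j) : ℝ)) / (D.card : ℝ)
      - (D.count (i, j) : ℝ)|

/-! Let `a, b, c` be the row, column and cell counts of `D`, `n = |D|`, and `p, q` the
indicators of `x` and `y`. Adding the record changes the residual `a b / n - c` of cell `(i, j)` by
`a b (1/(n+1) - 1/n) + (p b + a q - p q n) / (n+1)`.
By the reverse triangle inequality `|InDif D' - InDif D|` is at most the sum over all cells of
the absolute values of these terms; since `∑ a = ∑ b = n` and `∑ p = ∑ q = 1`, each of the four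
resulting sums equals `n / (n+1)`. -/

open Finset

lemma abs_sum_abs_sub_sum_abs_le {ι α : Type*} [AddCommGroup α] [LinearOrder α]
    [IsOrderedAddMonoid α] (s : Finset ι) (f g : ι → α) :
    |(∑ i ∈ s, |f i|) - (∑ i ∈ s, |g i|)| ≤ ∑ i ∈ s, |f i - g i| := by
  rw [← sum_sub_distrib]
  exact (abs_sum_le_sum_abs _ _).trans (sum_le_sum fun i _ => abs_abs_sub_abs_le_abs_sub _ _)

lemma abs_sum_sum_abs_sub_sum_sum_abs_le {ι κ α : Type*} [AddCommGroup α] [LinearOrder α]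
    [IsOrderedAddMonoid α] (s : Finset ι) (t : Finset κ) (f g : ι → κ → α) :
    |(∑ i ∈ s, ∑ j ∈ t, |f i j|) - (∑ i ∈ s, ∑ j ∈ t, |g i j|)| ≤
      ∑ i ∈ s, ∑ j ∈ t, |f i j - g i j| := by
  rw [← sum_sub_distrib]
  exact (abs_sum_le_sum_abs _ _).trans
    (sum_le_sum fun i _ => abs_sum_abs_sub_sum_abs_le _ _ _)

lemma abs_residual_change_le {a b c p q n : ℝ} (ha : 0 ≤ a) (hb : 0 ≤ b) (hp : 0 ≤ p) (hq : 0 ≤ q)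
    (hn : 0 ≤ n) :
    |((a + p) * (b + q) / (n + 1) - (c + p * q)) - (a * b / n - c)| ≤
      a * b * |1 / (n + 1) - 1 / n| + (p * b + a * q + p * q * n) / (n + 1) := by
  have hn1 : 0 < n + 1 := by linarith
  have hsplit : ((a + p) * (b + q) / (n + 1) - (c + p * q)) - (a * b / n - c) =
      a * b * (1 / (n + 1) - 1 / n) + (p * b + a * q - p * q * n) / (n + 1) := by
    field_simp
    ring
  rw [hsplit]
  refine (abs_add_le _ _).trans (add_le_add ?_ ?_)
  · rw [abs_mul, abs_of_nonneg (mul_nonneg ha hb)]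
  · rw [abs_div, abs_of_pos hn1]
    have hpb := mul_nonneg hp hb
    have haq := mul_nonneg ha hq
    have hpqn := mul_nonneg (mul_nonneg hp hq) hn
    gcongr
    exact abs_le.2 ⟨by linarith, by linarith⟩

-- Also at `n = 0`, where `1 / n = 0`.
lemma mul_self_mul_abs_one_div_add_one_sub_one_div {n : ℝ} (hn : 0 ≤ n) :
    n * n * |1 / (n + 1) - 1 / n| = n / (n + 1) := by
  rw [← abs_of_nonneg (mul_self_nonneg n), ← abs_mul, mul_sub, mul_one_div, mul_one_div,
    mul_self_div_self, abs_of_nonpos]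
  · field_simp; ring
  · rw [sub_nonpos, div_le_iff₀ (by linarith)]; nlinarith

section IndepDefect

variable {I J : Type*} [Fintype I] [Fintype J]

noncomputable def indepDefect (a : I → ℝ) (b : J → ℝ) (c : I → J → ℝ) (n : ℝ) : ℝ :=
  ∑ i, ∑ j, |a i * b j / n - c i j|

theorem abs_indepDefect_add_sub_le {a p : I → ℝ} {b q : J → ℝ} (c : I → J → ℝ) {n : ℝ}
    (ha : 0 ≤ a) (hb : 0 ≤ b) (hp : 0 ≤ p) (hq : 0 ≤ q)
    (hsa : ∑ i, a i = n) (hsb : ∑ j, b j = n) (hsp : ∑ i, p i = 1) (hsq : ∑ j, q j = 1) :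
    |indepDefect (a + p) (b + q) (fun i j => c i j + p i * q j) (n + 1) -
        indepDefect a b c n| ≤
      4 * (n / (n + 1)) := by
  have hn : 0 ≤ n := hsa ▸ sum_nonneg fun i _ => ha i
  calc _ ≤ ∑ i, ∑ j, |((a i + p i) * (b j + q j) / (n + 1) - (c i j + p i * q j))
          - (a i * b j / n - c i j)| :=
        abs_sum_sum_abs_sub_sum_sum_abs_le _ _ _ _
    _ ≤ ∑ i, ∑ j, (a i * b j * |1 / (n + 1) - 1 / n|
          + (p i * b j + a i * q j + p i * q j * n) / (n + 1)) :=
        sum_le_sum fun i _ => sum_le_sum fun j _ =>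
          abs_residual_change_le (ha i) (hb j) (hp i) (hq j) hn
    _ = n * n * |1 / (n + 1) - 1 / n| + (n + n + n) / (n + 1) := by
        simp only [sum_add_distrib, ← sum_div, ← sum_mul, ← mul_sum, hsa, hsb, hsp, hsq]
        ring
    _ = 4 * (n / (n + 1)) := by
        rw [mul_self_mul_abs_one_div_add_one_sub_one_div hn]
        ring

end IndepDefect

section Counts

variable {I J : Type*}

noncomputable def rowCount [DecidableEq I] (D : Multiset (I × J)) (i : I) : ℝ :=
  D.countP (·.1 = i)

noncomputable def colCount [DecidableEq J] (D : Multiset (I × J)) (j : J) : ℝ :=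
  D.countP (·.2 = j)

noncomputable def cellCount [DecidableEq I] [DecidableEq J] (D : Multiset (I × J)) (i : I) (j : J) :
    ℝ :=
  D.count (i, j)

lemma rowCount_cons [DecidableEq I] (D : Multiset (I × J)) (x : I) (y : J) :
    rowCount ((x, y) ::ₘ D) = rowCount D + Pi.single x 1 := by
  ext i
  by_cases h : x = i <;> simp [rowCount, h]

lemma colCount_cons [DecidableEq J] (D : Multiset (I × J)) (x : I) (y : J) :
    colCount ((x, y) ::ₘ D) = colCount D + Pi.single y 1 := by
  ext j
  by_cases h : y = j <;> simp [colCount, h]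

lemma cellCount_cons [DecidableEq I] [DecidableEq J] (D : Multiset (I × J)) (x : I) (y : J) :
    cellCount ((x, y) ::ₘ D) =
      fun i j => cellCount D i j + (Pi.single x 1 : I → ℝ) i * (Pi.single y 1 : J → ℝ) j := by
  ext i j
  by_cases hx : i = x <;> by_cases hy : j = y <;> simp [cellCount, hx, hy]

lemma Multiset.sum_countP_eq_card {α β : Type*} [Fintype β] [DecidableEq β]
    (D : Multiset α) (f : α → β) :
    ∑ b : β, D.countP (fun a => f a = b) = card D := by
  simpa [count_map, countP_eq_card_filter, eq_comm] using
    Multiset.sum_count_eq_card (s := univ) (m := D.map f) (by simp)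

lemma sum_rowCount [Fintype I] [DecidableEq I] (D : Multiset (I × J)) :
    ∑ i, rowCount D i = card D := by
  simp only [rowCount]
  exact_mod_cast Multiset.sum_countP_eq_card D Prod.fst

lemma sum_colCount [Fintype J] [DecidableEq J] (D : Multiset (I × J)) :
    ∑ j, colCount D j = card D := by
  simp only [colCount]
  exact_mod_cast Multiset.sum_countP_eq_card D Prod.snd

lemma InDif_eq_indepDefect [Fintype I] [Fintype J] [DecidableEq I] [DecidableEq J]
    (D : Multiset (I × J)) :
    InDif D = indepDefect (rowCount D) (colCount D) (cellCount D) (card D) := rfl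

end Counts

theorem stmt_1_general {I J : Type*} [Fintype I] [Fintype J] [DecidableEq I] [DecidableEq J]
    (D : Multiset (I × J)) (x : I) (y : J) :
    |InDif ((x, y) ::ₘ D) - InDif D| ≤ 4 := by
  rw [InDif_eq_indepDefect, InDif_eq_indepDefect, rowCount_cons, colCount_cons, cellCount_cons,
    Multiset.card_cons, Nat.cast_add, Nat.cast_one]
  calc _ ≤ 4 * ((card D : ℝ) / (card D + 1)) :=
        abs_indepDefect_add_sub_le _ (fun _ => Nat.cast_nonneg _) (fun _ => Nat.cast_nonneg _)
          (Pi.single_nonneg.2 zero_le_one) (Pi.single_nonneg.2 zero_le_one)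
          (sum_rowCount D) (sum_colCount D) (by simp) (by simp)
    _ ≤ 4 :=
        mul_le_of_le_one_right zero_le_four (div_le_one_of_le₀ (by linarith) (by positivity))

theorem stmt_1 {I J : Type*} [Fintype I] [Fintype J] [DecidableEq I] [DecidableEq J]
    (D : Multiset (I × J)) (hn : 1 ≤ Multiset.card D) (x : I) (y : J) :
    |InDif ((x, y) ::ₘ D) - InDif D| ≤ 4 :=
  stmt_1_general D x y
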